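/- arXiv:2402.07015 — 2 statements merged into one kernel-verified Lean document; each statement's English description precedes it below -/
import Mathlib

section
/- Thue's three-letter sequence is square-free: the sequence ν : ℕ → ℕ defined by ν n = z (n+1) − z n − 1, where z is the strictly increasing enumeration of the positions of false (0) in the Thue–Morse sequence t, contains no square; that is, there do not exist i, n : ℕ with n ≥ 1 such that ν (i + j) = ν (i + n + j) for all j < n. (ν begins 2, 1, 0, 2, 0, 1, 2, 1, 0, 1, 2, …, recording the number of 1s between consecutive 0s of t.) -/
/-- The Thue–Morse sequence: `t n = true` iff the number of 1s in the
binary expansion of `n` is odd. -/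
def thueMorse (n : ℕ) : Bool := (Nat.digits 2 n).count 1 % 2 == 1

/-- The strictly monotone enumeration of the positions of `false` (0)
in the Thue–Morse sequence. -/
noncomputable def zeroPos : ℕ → ℕ := Nat.nth (fun n => thueMorse n = false)

/-- Thue's three-letter sequence `ν`, recording the number of 1s between
consecutive 0s of the Thue–Morse sequence. -/
noncomputable def nu (n : ℕ) : ℕ := zeroPos (n + 1) - zeroPos n - 1

lemma tm_two_mul (k : ℕ) : thueMorse (2*k) = thueMorse k := by
  rcases Nat.eq_zero_or_pos k with h | h
  · subst h; rfl
  · unfold thueMorse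
    rw [Nat.digits_def' (by norm_num : 1 < 2) (by omega)]
    simp [Nat.mul_div_cancel_left _ (by norm_num : 0 < 2), Nat.mul_mod_right]

lemma tm_two_mul_add_one (k : ℕ) : thueMorse (2*k+1) = !thueMorse k := by
  unfold thueMorse
  rw [Nat.digits_def' (by norm_num : 1 < 2) (by omega)]
  have h1 : (2*k+1) % 2 = 1 := by omega
  have h2 : (2*k+1) / 2 = k := by omega
  rw [h1, h2]
  rcases Nat.mod_two_eq_zero_or_one ((Nat.digits 2 k).count 1) with h | h <;>
    simp [List.count_cons, Nat.add_mod, h]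

lemma tm_ne (k : ℕ) : thueMorse (2*k) ≠ thueMorse (2*k+1) := by
  rw [tm_two_mul, tm_two_mul_add_one]
  cases thueMorse k <;> simp

/-- No three equal consecutive values in the Thue–Morse sequence. -/
lemma noEE (k : ℕ) (h1 : thueMorse k = thueMorse (k+1))
    (h2 : thueMorse (k+1) = thueMorse (k+2)) : False := by
  rcases Nat.even_or_odd k with ⟨a, ha⟩ | ⟨a, ha⟩
  · apply tm_ne a
    rw [show (2*a : ℕ) = k by omega]; exact h1
  · apply tm_ne (a+1)
    rw [show (2*(a+1)+1 : ℕ) = k+2 by omega, show (2*(a+1) : ℕ) = k+1 by omega]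
    exact h2

/-- The Thue–Morse sequence is overlap-free. -/
lemma overlapFree : ∀ n, 1 ≤ n → ∀ i,
    ¬ (∀ j ≤ n, thueMorse (i+j) = thueMorse (i+n+j)) := by
  intro n
  induction n using Nat.strong_induction_on with
  | _ n IH =>
  intro hn i H
  rcases Nat.even_or_odd n with ⟨m, hm⟩ | ⟨m, hm⟩
  · -- n = 2m even, m ≥ 1 : reduce to an overlap of half the length
    have hm1 : 1 ≤ m := by omega
    refine IH m (by omega) hm1 (i/2) ?_
    intro j' hj'
    have e := H (2*j') (by omega)
    rcases Nat.even_or_odd i with ⟨p, hp⟩ | ⟨p, hp⟩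
    · have l1 : i + 2*j' = 2*(p+j') := by omega
      have l2 : i + n + 2*j' = 2*(p+m+j') := by omega
      rw [l1, l2, tm_two_mul, tm_two_mul] at e
      rw [show i/2 = p by omega]
      exact e
    · have l1 : i + 2*j' = 2*(p+j')+1 := by omega
      have l2 : i + n + 2*j' = 2*(p+m+j')+1 := by omega
      rw [l1, l2, tm_two_mul_add_one, tm_two_mul_add_one] at e
      have e' : thueMorse (p+j') = thueMorse (p+m+j') := by
        cases hb : thueMorse (p+j') <;> cases hb2 : thueMorse (p+m+j') <;>
          simp [hb, hb2] at e ⊢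
      rw [show i/2 = p by omega]
      exact e'
  · -- n odd
    rcases Nat.lt_or_ge n 2 with h2 | h2
    · -- n = 1
      have hn1 : n = 1 := by omega
      subst hn1
      have h0 := H 0 (by omega)
      have h1 := H 1 (by omega)
      exact noEE i (by simpa using h0) (by
        rw [show i+1 = i+1+0 by omega, show i+2 = i+1+1 by omega]
        simpa using h1)
    · -- n odd ≥ 3 : parity contradiction
      have E : ∀ k, i ≤ 2*k+1 → 2*k+2 ≤ i + 2*n → thueMorse k = thueMorse (k+1) := by
        intro k hk1 hk2
        by_cases hc : 2*k+2 ≤ i + n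
        · obtain ⟨j, hj⟩ : ∃ j, 2*k+1 = i + j ∧ j + 1 ≤ n := ⟨2*k+1-i, by omega⟩
          have e1 := H j (by omega)
          have e2 := H (j+1) (by omega)
          have l1 : i + j = 2*k+1 := by omega
          have l2 : i + n + j = 2*(k+m+1) := by omega
          have l3 : i + (j+1) = 2*(k+1) := by omega
          have l4 : i + n + (j+1) = 2*(k+m+1)+1 := by omega
          rw [l1, l2, tm_two_mul_add_one, tm_two_mul] at e1
          rw [l3, l4, tm_two_mul, tm_two_mul_add_one] at e2
          rw [e2, ← e1, Bool.not_not]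
        · obtain ⟨j, hj⟩ : ∃ j, 2*k+1 - n = i + j ∧ j + 1 ≤ n := ⟨2*k+1-n-i, by omega⟩
          have e1 := H j (by omega)
          have e2 := H (j+1) (by omega)
          have l1 : i + j = 2*(k-m) := by omega
          have l2 : i + n + j = 2*k+1 := by omega
          have l3 : i + (j+1) = 2*(k-m)+1 := by omega
          have l4 : i + n + (j+1) = 2*(k+1) := by omega
          rw [l1, l2, tm_two_mul, tm_two_mul_add_one] at e1
          rw [l3, l4, tm_two_mul_add_one, tm_two_mul] at e2
          rw [← e2, e1, Bool.not_not]
      have hA := E (i/2) (by omega) (by omega)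
      have hB := E (i/2+1) (by omega) (by omega)
      exact noEE (i/2) hA (by
        rw [show i/2+2 = i/2+1+1 by omega]; exact hB)

lemma tm_zero : thueMorse 0 = false := by simp [thueMorse]

lemma tm_three : thueMorse 3 = false := by
  have h1 : thueMorse 1 = true := by
    have := tm_two_mul_add_one 0
    rw [tm_zero] at this
    simpa using this
  have h3 := tm_two_mul_add_one 1
  rw [h1] at h3
  simpa using h3

lemma pinf : {n | thueMorse n = false}.Infinite := by
  have hmem : ∀ j : ℕ, thueMorse (3 * 2^j) = false := by
    intro j
    induction j with
    | zero => simpa using tm_three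
    | succ j ih =>
      have : 3 * 2^(j+1) = 2 * (3 * 2^j) := by ring
      rw [this, tm_two_mul]; exact ih
  have hsm : StrictMono (fun j : ℕ => 3 * 2^j) := by
    apply strictMono_nat_of_lt_succ
    intro j
    have : (2:ℕ)^j < 2^(j+1) := by
      apply Nat.pow_lt_pow_right (by norm_num) (by omega)
    simpa using by nlinarith [this]
  exact Set.infinite_of_injective_forall_mem hsm.injective hmem

lemma zp_mono : StrictMono zeroPos := Nat.nth_strictMono pinf

lemma zp_mem (k : ℕ) : thueMorse (zeroPos k) = false :=
  Nat.nth_mem_of_infinite pinf k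

lemma zp_count {x : ℕ} (hx : thueMorse x = false) :
    zeroPos (Nat.count (fun n => thueMorse n = false) x) = x :=
  Nat.nth_count hx

lemma win (l u x : ℕ) (hx : thueMorse x = false) (h1 : zeroPos l ≤ x)
    (h2 : x ≤ zeroPos u) : ∃ c, l ≤ c ∧ c ≤ u ∧ x = zeroPos c := by
  refine ⟨Nat.count (fun n => thueMorse n = false) x, ?_, ?_, (zp_count hx).symm⟩
  · exact zp_mono.le_iff_le.mp (by rw [zp_count hx]; exact h1)
  · exact zp_mono.le_iff_le.mp (by rw [zp_count hx]; exact h2)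

/-- Thue's three-letter sequence `ν` is square-free. -/
theorem nu_squareFree :
    ¬ ∃ (i n : ℕ), 1 ≤ n ∧ ∀ j < n, nu (i + j) = nu (i + n + j) := by
  rintro ⟨i, n, hn, hsq⟩
  have gap : ∀ k, zeroPos (k+1) = zeroPos k + nu k + 1 := by
    intro k
    have := zp_mono (lt_add_one k)
    unfold nu
    omega
  set N := zeroPos (i+n) - zeroPos i with hNdef
  have shift : ∀ k ≤ n, zeroPos (i+n+k) = zeroPos (i+k) + N := by
    intro k
    induction k with
    | zero =>
      intro _
      have : zeroPos i ≤ zeroPos (i+n) := zp_mono.le_iff_le.mpr (by omega)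
      simp only [Nat.add_zero]
      omega
    | succ k ih =>
      intro hk
      have hk' := ih (by omega)
      have hs := hsq k (by omega)
      rw [show i+n+(k+1) = (i+n+k)+1 from rfl, show i+(k+1) = (i+k)+1 from rfl,
        gap, gap]
      omega
  have hN1 : 1 ≤ N := by
    have := zp_mono (show i < i+n by omega)
    omega
  set a := zeroPos i with hadef
  have hzin : zeroPos (i+n) = a + N := by
    have := shift 0 (by omega)
    simpa using this
  have hzi2n : zeroPos (i+2*n) = a + N + N := by
    have := shift n (by omega)
    rw [show i+n+n = i+2*n by ring] at this
    omega
  apply overlapFree N hN1 a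
  intro j hj
  have iff1 : thueMorse (a+j) = false ↔ thueMorse (a+N+j) = false := by
    constructor
    · intro h
      obtain ⟨c, hc1, hc2, hc3⟩ := win i (i+n) (a+j) h (by omega) (by omega)
      have hs := shift (c-i) (by omega)
      rw [show i+(c-i) = c by omega] at hs
      rw [show a+N+j = zeroPos (i+n+(c-i)) by omega]
      exact zp_mem _
    · intro h
      obtain ⟨c, hc1, hc2, hc3⟩ := win (i+n) (i+2*n) (a+N+j) h (by omega) (by omega)
      have hs := shift (c-(i+n)) (by omega)
      rw [show i+n+(c-(i+n)) = c by omega] at hs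
      rw [show a+j = zeroPos (i+(c-(i+n))) by omega]
      exact zp_mem _
  cases h1 : thueMorse (a+j) <;> cases h2 : thueMorse (a+N+j) <;>
    first
      | rfl
      | (exfalso; rw [h1, h2] at iff1; simp at iff1)
end

section
/- The orbit closure of the Thue–Morse sequence under the shift map is uncountable: the set closure {σ^[k] t | k : ℕ} ⊆ (ℕ → Bool) is not countable. -/
/-- The shift map on the one-sided binary full shift. -/
def shift (x : ℕ → Bool) : ℕ → Bool := fun n => x (n + 1)

open Filter Topology

theorem Perfect.not_countable {α : Type*} [TopologicalSpace α]
    [TopologicalSpace.IsCompletelyMetrizableSpace α] {C : Set α} (hC : Perfect C)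
    (hne : C.Nonempty) : ¬ C.Countable := by
  intro hcount
  let := TopologicalSpace.upgradeIsCompletelyMetrizable α
  obtain ⟨f, hrange, -, hinj⟩ := hC.exists_nat_bool_injection hne
  have : Uncountable (ℕ → Bool) := by
    rw [← Cardinal.aleph0_lt_mk_iff]
    simpa using Cardinal.cantor Cardinal.aleph0
  exact Set.not_countable_univ (by simpa using (hcount.mono hrange).preimage hinj)

theorem shift_iterate_apply (k : ℕ) (x : ℕ → Bool) (n : ℕ) : shift^[k] x n = x (n + k) := by
  induction k generalizing n with
  | zero => rfl
  | succ k ih =>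
    rw [Function.iterate_succ_apply', shift, ih, Nat.add_right_comm, Nat.add_assoc]

theorem thueMorse_two_mul (n : ℕ) : thueMorse (2 * n) = thueMorse n := by
  rcases Nat.eq_zero_or_pos n with rfl | hn
  · rfl
  · unfold thueMorse
    rw [Nat.digits_def' (by norm_num) (by omega), Nat.mul_mod_right,
      Nat.mul_div_cancel_left _ (by norm_num)]
    simp

theorem thueMorse_two_mul_add_one (n : ℕ) : thueMorse (2 * n + 1) = !thueMorse n := by
  unfold thueMorse
  rw [Nat.digits_def' (by norm_num) (by omega), show (2 * n + 1) % 2 = 1 by omega,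
    show (2 * n + 1) / 2 = n by omega, List.count_cons_self]
  rcases Nat.mod_two_eq_zero_or_one ((Nat.digits 2 n).count 1) with h | h <;>
    simp [Nat.add_mod, h]

theorem thueMorse_two_pow_mul (m n : ℕ) : thueMorse (2 ^ m * n) = thueMorse n := by
  induction m with
  | zero => simp
  | succ m ih => rw [pow_succ', mul_assoc, thueMorse_two_mul, ih]

theorem thueMorse_add_two_pow {m n : ℕ} (hn : n < 2 ^ m) :
    thueMorse (n + 2 ^ m) = !thueMorse n := by
  induction m generalizing n with
  | zero =>
    obtain rfl : n = 0 := by simpa using hn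
    exact thueMorse_two_mul_add_one 0
  | succ m ih =>
    obtain ⟨a, rfl | rfl⟩ : ∃ a, n = 2 * a ∨ n = 2 * a + 1 := ⟨n / 2, by omega⟩
    · rw [pow_succ', ← mul_add, thueMorse_two_mul, thueMorse_two_mul, ih (by omega)]
    · rw [pow_succ', add_right_comm, ← mul_add, thueMorse_two_mul_add_one,
        thueMorse_two_mul_add_one, ih (by omega)]

theorem thueMorse_add_three_mul_two_pow {m n : ℕ} (hn : n < 2 ^ m) :
    thueMorse (n + 3 * 2 ^ m) = thueMorse n := by
  rw [show n + 3 * 2 ^ m = n + 2 ^ m + 2 ^ (m + 1) by ring,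
    thueMorse_add_two_pow (by rw [pow_succ]; omega), thueMorse_add_two_pow hn, Bool.not_not]

theorem tendsto_shift_iterate_add_three_mul_two_pow_thueMorse (k : ℕ) :
    Tendsto (fun m => shift^[k + 3 * 2 ^ m] thueMorse) atTop (𝓝 (shift^[k] thueMorse)) := by
  refine tendsto_pi_nhds.2 fun n => tendsto_nhds_of_eventually_eq ?_
  filter_upwards [eventually_gt_atTop (n + k)] with m hm
  rw [shift_iterate_apply, shift_iterate_apply, ← add_assoc,
    thueMorse_add_three_mul_two_pow (hm.trans Nat.lt_two_pow_self)]

theorem shift_iterate_add_three_mul_two_pow_thueMorse_ne {k m : ℕ} (hk : k ≤ 2 ^ (m + 1)) :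
    shift^[k + 3 * 2 ^ m] thueMorse ≠ shift^[k] thueMorse := by
  intro h
  have := congrFun h (2 ^ (m + 1) - k)
  rw [shift_iterate_apply, shift_iterate_apply, ← add_assoc, Nat.sub_add_cancel hk,
    show 2 ^ (m + 1) + 3 * 2 ^ m = 2 ^ m * 5 by ring, pow_succ, thueMorse_two_pow_mul,
    thueMorse_two_pow_mul] at this
  exact absurd this (by decide)

theorem preperfect_thueMorse_orbit : Preperfect {x | ∃ k : ℕ, shift^[k] thueMorse = x} := by
  rintro _ ⟨k, rfl⟩
  rw [accPt_iff_frequently]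
  refine (tendsto_shift_iterate_add_three_mul_two_pow_thueMorse k).frequently
    (Eventually.frequently ?_)
  filter_upwards [eventually_ge_atTop k] with m hm
  have hk : k ≤ 2 ^ (m + 1) := hm.trans (Nat.lt_two_pow_self.le.trans (by gcongr <;> omega))
  exact ⟨shift_iterate_add_three_mul_two_pow_thueMorse_ne hk, _, rfl⟩

/-- The orbit closure of the Thue–Morse sequence under the shift map is
uncountable. -/
theorem thueMorse_orbitClosure_uncountable :
    ¬ (closure {x : ℕ → Bool | ∃ k : ℕ, shift^[k] thueMorse = x}).Countable :=
  preperfect_thueMorse_orbit.perfect_closure.not_countable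
    ⟨thueMorse, subset_closure ⟨0, rfl⟩⟩
end
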